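/- arXiv:2302.09637 — 3 statements merged into one kernel-verified Lean document; each statement's English description precedes it below -/
import Mathlib

section
/- Let H be a graph with maximum degree Δ(H) ≤ Δ. Then for every edge set E ⊆ E(H) there exists a matching M ⊆ E of size at least |E|/(2Δ³) which is 3-independent in H. -/
open Finset
open scoped Classical

private def Conf {V : Type*} (H : SimpleGraph V) (e f : Sym2 V) : Prop :=
  ∃ x y, x ∈ e ∧ y ∈ f ∧ (x = y ∨ ∃ v, H.Adj v x ∧ H.Adj v y)

private lemma conf_symm {V : Type*} {H : SimpleGraph V} {e f : Sym2 V}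
    (h : Conf H e f) : Conf H f e := by
  obtain ⟨x, y, hx, hy, hc⟩ := h
  refine ⟨y, x, hy, hx, ?_⟩
  rcases hc with rfl | ⟨v, h1, h2⟩
  · exact Or.inl rfl
  · exact Or.inr ⟨v, h2, h1⟩

private lemma conf_self {V : Type*} {H : SimpleGraph V} (e : Sym2 V) : Conf H e e := by
  induction e using Sym2.ind with
  | _ a b => exact ⟨a, a, by simp, by simp, Or.inl rfl⟩

private lemma conf_count {V : Type*} [Fintype V] [DecidableEq V] {Δ : ℕ}
    {H : SimpleGraph V} (hdeg : ∀ v, H.degree v ≤ Δ)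
    {e : Sym2 V} (he : e ∈ H.edgeFinset) :
    (H.edgeFinset.filter (Conf H e)).card ≤ 2 * Δ ^ 3 := by
  induction e using Sym2.ind with
  | _ a b =>
  rw [SimpleGraph.mem_edgeFinset, SimpleGraph.mem_edgeSet] at he
  set S : Finset V := ((H.neighborFinset a).biUnion (fun v => H.neighborFinset v)) ∪
      ((H.neighborFinset b).biUnion (fun v => H.neighborFinset v)) with hS
  have hsub : H.edgeFinset.filter (Conf H s(a, b)) ⊆
      S.biUnion (fun y => H.incidenceFinset y) := by
    intro f hf
    rw [mem_filter] at hf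
    obtain ⟨hf1, x, y, hx, hy, hcase⟩ := hf
    have hyS : y ∈ S := by
      rcases hcase with rfl | ⟨v, h1, h2⟩
      · rcases Sym2.mem_iff.mp hx with rfl | rfl
        · exact mem_union_left _ (mem_biUnion.mpr
            ⟨b, (H.mem_neighborFinset _ _).mpr he, (H.mem_neighborFinset _ _).mpr he.symm⟩)
        · exact mem_union_right _ (mem_biUnion.mpr
            ⟨a, (H.mem_neighborFinset _ _).mpr he.symm, (H.mem_neighborFinset _ _).mpr he⟩)
      · rcases Sym2.mem_iff.mp hx with rfl | rfl
        · exact mem_union_left _ (mem_biUnion.mpr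
            ⟨v, (H.mem_neighborFinset _ _).mpr h1.symm, (H.mem_neighborFinset _ _).mpr h2⟩)
        · exact mem_union_right _ (mem_biUnion.mpr
            ⟨v, (H.mem_neighborFinset _ _).mpr h1.symm, (H.mem_neighborFinset _ _).mpr h2⟩)
    refine mem_biUnion.mpr ⟨y, hyS, ?_⟩
    rw [SimpleGraph.mem_incidenceFinset]
    exact ⟨SimpleGraph.mem_edgeFinset.mp hf1, hy⟩
  have hScard : S.card ≤ 2 * Δ ^ 2 := by
    have h1 : ((H.neighborFinset a).biUnion (fun v => H.neighborFinset v)).card ≤ Δ * Δ := by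
      calc ((H.neighborFinset a).biUnion (fun v => H.neighborFinset v)).card
          ≤ ∑ v ∈ H.neighborFinset a, (H.neighborFinset v).card := Finset.card_biUnion_le
        _ ≤ ∑ _v ∈ H.neighborFinset a, Δ := by
            refine Finset.sum_le_sum fun v _ => ?_
            rw [SimpleGraph.card_neighborFinset_eq_degree]; exact hdeg v
        _ = (H.neighborFinset a).card * Δ := by rw [Finset.sum_const, smul_eq_mul]
        _ ≤ Δ * Δ := by
            have := hdeg a
            rw [SimpleGraph.card_neighborFinset_eq_degree]
            exact Nat.mul_le_mul_right _ this
    have h2 : ((H.neighborFinset b).biUnion (fun v => H.neighborFinset v)).card ≤ Δ * Δ := by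
      calc ((H.neighborFinset b).biUnion (fun v => H.neighborFinset v)).card
          ≤ ∑ v ∈ H.neighborFinset b, (H.neighborFinset v).card := Finset.card_biUnion_le
        _ ≤ ∑ _v ∈ H.neighborFinset b, Δ := by
            refine Finset.sum_le_sum fun v _ => ?_
            rw [SimpleGraph.card_neighborFinset_eq_degree]; exact hdeg v
        _ = (H.neighborFinset b).card * Δ := by rw [Finset.sum_const, smul_eq_mul]
        _ ≤ Δ * Δ := by
            have := hdeg b
            rw [SimpleGraph.card_neighborFinset_eq_degree]
            exact Nat.mul_le_mul_right _ this
    calc S.card ≤ ((H.neighborFinset a).biUnion (fun v => H.neighborFinset v)).card +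
        ((H.neighborFinset b).biUnion (fun v => H.neighborFinset v)).card := Finset.card_union_le _ _
      _ ≤ Δ * Δ + Δ * Δ := Nat.add_le_add h1 h2
      _ = 2 * Δ ^ 2 := by ring
  calc (H.edgeFinset.filter (Conf H s(a, b))).card
      ≤ (S.biUnion fun y => H.incidenceFinset y).card := Finset.card_le_card hsub
    _ ≤ ∑ y ∈ S, (H.incidenceFinset y).card := Finset.card_biUnion_le
    _ ≤ ∑ _y ∈ S, Δ := by
        refine Finset.sum_le_sum fun y _ => ?_
        rw [SimpleGraph.card_incidenceFinset_eq_degree]; exact hdeg y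
    _ = S.card * Δ := by rw [Finset.sum_const, smul_eq_mul]
    _ ≤ 2 * Δ ^ 2 * Δ := Nat.mul_le_mul_right _ hScard
    _ = 2 * Δ ^ 3 := by ring

private lemma greedy {V : Type*} [Fintype V] [DecidableEq V] {Δ : ℕ}
    {H : SimpleGraph V} (hdeg : ∀ v, H.degree v ≤ Δ) :
    ∀ n (E : Finset (Sym2 V)), E.card ≤ n → E ⊆ H.edgeFinset →
      ∃ M ⊆ E, E.card ≤ 2 * Δ ^ 3 * M.card ∧
        ∀ e ∈ M, ∀ f ∈ M, e ≠ f → ¬ Conf H e f := by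
  intro n
  induction n with
  | zero =>
    intro E hc _
    refine ⟨∅, empty_subset _, ?_, by simp⟩
    simp [Nat.le_zero.mp hc]
  | succ n ih =>
    intro E hc hE
    rcases E.eq_empty_or_nonempty with rfl | ⟨e, heE⟩
    · exact ⟨∅, empty_subset _, by simp, by simp⟩
    · set E' := E.filter (fun f => ¬ Conf H e f) with hE'
      have heE' : e ∉ E' := by
        intro h
        exact (mem_filter.mp h).2 (conf_self e)
      have hsub' : E' ⊆ E := filter_subset _ _
      have hc' : E'.card ≤ n := by
        have h1 : E' ⊆ E.erase e := by
          intro f hf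
          refine mem_erase.mpr ⟨?_, hsub' hf⟩
          rintro rfl; exact heE' hf
        have h2 := Finset.card_le_card h1
        rw [Finset.card_erase_of_mem heE] at h2
        omega
      obtain ⟨M', hM'sub, hM'card, hM'ind⟩ := ih E' hc' (hsub'.trans hE)
      have heM' : e ∉ M' := fun h => heE' (hM'sub h)
      refine ⟨insert e M', ?_, ?_, ?_⟩
      · intro f hf
        rcases mem_insert.mp hf with rfl | hf
        · exact heE
        · exact hsub' (hM'sub hf)
      · have hsplit : (E.filter (Conf H e)).card + E'.card = E.card := by
          rw [hE']
          exact Finset.card_filter_add_card_filter_not _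
        have hfc : (E.filter (Conf H e)).card ≤ 2 * Δ ^ 3 := by
          refine le_trans (Finset.card_le_card ?_) (conf_count hdeg (hE heE))
          exact Finset.filter_subset_filter _ hE
        rw [Finset.card_insert_of_notMem heM']
        have : 2 * Δ ^ 3 * (M'.card + 1) = 2 * Δ ^ 3 * M'.card + 2 * Δ ^ 3 := by ring
        omega
      · intro a ha b hb hab
        rcases mem_insert.mp ha with h1 | h1 <;> rcases mem_insert.mp hb with h2 | h2
        · exact absurd (h1.trans h2.symm) hab
        · exact h1 ▸ (mem_filter.mp (hM'sub h2)).2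
        · exact fun h => (mem_filter.mp (hM'sub h1)).2 (conf_symm (h2 ▸ h))
        · exact hM'ind a h1 b h2 hab

/-- **Lemma: large 3-independent matchings (Lemma 2.5).**  In a graph `H` of maximum degree
at most `Δ`, every edge set `E ⊆ E(H)` contains a matching `M` of size at least
`|E| / (2Δ³)` which is 3-independent:  no vertex of `H` has two distinct neighbours covered
by `M` unless those two neighbours span an edge of `M`. -/
theorem three_independent_matching
    {V : Type*} [Fintype V] [DecidableEq V] (Δ : ℕ)
    (H : SimpleGraph V)
    (hdeg : ∀ v, H.degree v ≤ Δ)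
    (E : Finset (Sym2 V)) (hE : E ⊆ H.edgeFinset) :
    ∃ M ⊆ E,
      ((E.card : ℝ) / (2 * (Δ : ℝ) ^ 3) ≤ (M.card : ℝ)) ∧
      (∀ e ∈ M, ∀ f ∈ M, e ≠ f → ∀ v : V, ¬(v ∈ e ∧ v ∈ f)) ∧
      (∀ v x y : V, H.Adj v x → H.Adj v y → x ≠ y →
        (∃ e ∈ M, x ∈ e) → (∃ f ∈ M, y ∈ f) → s(x, y) ∈ M) := by
  obtain ⟨M, hMsub, hMcard, hMind⟩ := greedy hdeg E.card E le_rfl hE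
  refine ⟨M, hMsub, ?_, ?_, ?_⟩
  · rcases Nat.eq_zero_or_pos Δ with rfl | hΔ
    · simp only [Nat.pow_succ, Nat.mul_zero, Nat.zero_mul, nonpos_iff_eq_zero] at hMcard
      simp [hMcard]
    · rw [div_le_iff₀ (by positivity)]
      have : (E.card : ℝ) ≤ (M.card : ℝ) * (2 * (Δ : ℝ) ^ 3) := by
        calc (E.card : ℝ) ≤ ((2 * Δ ^ 3 * M.card : ℕ) : ℝ) := by exact_mod_cast hMcard
          _ = (M.card : ℝ) * (2 * (Δ : ℝ) ^ 3) := by push_cast; ring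
      exact this
  · intro e he f hf hef v ⟨hv1, hv2⟩
    exact hMind e he f hf hef ⟨v, v, hv1, hv2, Or.inl rfl⟩
  · intro v x y hvx hvy hxy ⟨e, he, hxe⟩ ⟨f, hf, hyf⟩
    by_cases hef : e = f
    · subst hef
      have : e = s(x, y) := (Sym2.mem_and_mem_iff hxy).mp ⟨hxe, hyf⟩
      rwa [← this]
    · exact absurd ⟨x, y, hxe, hyf, Or.inr ⟨v, hvx, hvy⟩⟩ (hMind e he f hf hef)
end

section
/- Let r, k ∈ ℕ \ {1} and let R be an r-vertex graph with δ(R) ≥ (1 − 1/k)r + 1. Let Q₁ = (x₁, …, x_k) and Q₂ = (y₁, …, y_k) be two ordered tuples of k distinct vertices of R (the sets {x₁,…,x_k} and {y₁,…,y_k} need not be disjoint). Then there exists a walk W = (z₁, …, z_t) in R such that: (i) 3k ≤ t ≤ 3k³ and k divides t; (ii) for all distinct i, j ∈ [t] with |i − j| ≤ k − 1, if {i, j} is not a subset of {1, …, k} ∪ {t−k+1, …, t}, then z_i z_j ∈ E(R); and (iii) z_i = x_i and z_{t−k+i} = y_i for each i ∈ [k]. -/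
open Finset
open scoped Classical

section CliqueWalkAux

lemma cw_cn_lemma (k r : ℕ) (hk : 2 ≤ k) (hr : 2 ≤ r) (R : SimpleGraph (Fin r))
    (hδ : ∀ v, (1 - 1 / (k : ℝ)) * r + 1 ≤ (R.degree v : ℝ)) :
    ∀ S : Finset (Fin r), S.card ≤ k → ∃ w, ∀ s ∈ S, R.Adj s w := by
  have hk0 : (0:ℝ) < k := by positivity
  have hdegle : ∀ v : Fin r, R.degree v < r := by
    intro v
    have := R.degree_lt_card_verts v
    simpa using this
  have hnd : ∀ v : Fin r, ((r:ℝ) - R.degree v) ≤ (r:ℝ)/k - 1 := by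
    intro v
    have h := hδ v
    have : (1 - 1/(k:ℝ)) * r = r - r/k := by ring
    rw [this] at h
    linarith
  intro S hS
  by_contra hcon
  push_neg at hcon
  have hsub : (Finset.univ : Finset (Fin r)) ⊆ S.biUnion (fun s => (R.neighborFinset s)ᶜ) := by
    intro w _
    obtain ⟨s, hs, hns⟩ := hcon w
    refine Finset.mem_biUnion.2 ⟨s, hs, ?_⟩
    simp [SimpleGraph.mem_neighborFinset, hns]
  have hcard : r ≤ ∑ s ∈ S, ((R.neighborFinset s)ᶜ.card) := by
    calc r = (Finset.univ : Finset (Fin r)).card := by simp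
    _ ≤ (S.biUnion (fun s => (R.neighborFinset s)ᶜ)).card := Finset.card_le_card hsub
    _ ≤ ∑ s ∈ S, ((R.neighborFinset s)ᶜ.card) := Finset.card_biUnion_le
  have hcardR : (r:ℝ) ≤ ∑ s ∈ S, (((R.neighborFinset s)ᶜ.card : ℝ)) := by
    have := Nat.cast_le (α := ℝ).2 hcard
    push_cast at this
    exact this
  have hterm : ∀ s ∈ S, (((R.neighborFinset s)ᶜ.card : ℝ)) ≤ (r:ℝ)/k - 1 := by
    intro s _
    have hcc : (R.neighborFinset s)ᶜ.card = r - R.degree s := by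
      rw [Finset.card_compl]
      simp [R.card_neighborFinset_eq_degree]
    rw [hcc]
    have : ((r - R.degree s : ℕ) : ℝ) = (r:ℝ) - R.degree s := by
      have := le_of_lt (hdegle s)
      push_cast [Nat.cast_sub this]
      ring
    rw [this]
    exact hnd s
  have hsum : ∑ s ∈ S, (((R.neighborFinset s)ᶜ.card : ℝ)) ≤ S.card * ((r:ℝ)/k - 1) := by
    calc ∑ s ∈ S, (((R.neighborFinset s)ᶜ.card : ℝ)) ≤ ∑ _s ∈ S, ((r:ℝ)/k - 1) :=
          Finset.sum_le_sum hterm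
    _ = S.card * ((r:ℝ)/k - 1) := by rw [Finset.sum_const, nsmul_eq_mul]
  have hck : (S.card : ℝ) ≤ k := by exact_mod_cast hS
  have h1 : (1:ℝ) ≤ (r:ℝ)/k - 1 := by
    have hd := hdegle ⟨0, by omega⟩
    have hd' : (R.degree (⟨0, by omega⟩ : Fin r) : ℝ) ≤ (r:ℝ) - 1 := by
      have h2 : (R.degree (⟨0, by omega⟩ : Fin r) : ℕ) + 1 ≤ r := hd
      have := Nat.cast_le (α := ℝ).2 h2
      push_cast at this
      linarith
    have := hnd ⟨0, by omega⟩
    linarith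
  have hfin : (S.card : ℝ) * ((r:ℝ)/k - 1) ≤ (r:ℝ) - k := by
    have h2 : (S.card : ℝ) * ((r:ℝ)/k - 1) ≤ (k:ℝ) * ((r:ℝ)/k - 1) := by
      apply mul_le_mul_of_nonneg_right hck
      linarith
    have h3 : (k:ℝ) * ((r:ℝ)/k - 1) = (r:ℝ) - k := by
      field_simp
    linarith
  have hfin2 : (r:ℝ) ≤ (r:ℝ) - k := le_trans hcardR (le_trans hsum hfin)
  have : (k:ℝ) ≤ 0 := by linarith
  linarith

lemma cw_greedy_lemma (k r : ℕ) (hr : 0 < r) (R : SimpleGraph (Fin r))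
    (CN : ∀ S : Finset (Fin r), S.card ≤ k → ∃ w, ∀ s ∈ S, R.Adj s w)
    (n : ℕ) (S : ℕ → Finset (Fin r)) (hS : ∀ i, i < n → (S i).card + i ≤ k) :
    ∃ f : ℕ → Fin r, ∀ i, i < n →
      (∀ v ∈ S i, R.Adj v (f i)) ∧ (∀ i', i' < i → R.Adj (f i') (f i)) := by
  induction n with
  | zero => exact ⟨fun _ => ⟨0, hr⟩, by omega⟩
  | succ n ih =>
    obtain ⟨f, hf⟩ := ih (fun i hi => hS i (by omega))
    have hcard : ((S n) ∪ (Finset.range n).image f).card ≤ k := by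
      calc ((S n) ∪ (Finset.range n).image f).card
          ≤ (S n).card + ((Finset.range n).image f).card := Finset.card_union_le _ _
      _ ≤ (S n).card + n := by
          have : ((Finset.range n).image f).card ≤ n := by
            calc ((Finset.range n).image f).card ≤ (Finset.range n).card :=
              Finset.card_image_le
            _ = n := Finset.card_range n
          omega
      _ ≤ k := hS n (by omega)
    obtain ⟨w, hw⟩ := CN _ hcard
    refine ⟨Function.update f n w, ?_⟩
    intro i hi
    rcases Nat.lt_or_ge i n with h | h
    · constructor
      · intro v hv
        rw [Function.update_of_ne (by omega)]
        exact (hf i h).1 v hv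
      · intro i' hi'
        rw [Function.update_of_ne (by omega), Function.update_of_ne (by omega)]
        exact (hf i h).2 i' hi'
    · have hin : i = n := by omega
      subst hin
      constructor
      · intro v hv
        rw [Function.update_self]
        exact hw v (Finset.mem_union_left _ hv)
      · intro i' hi'
        rw [Function.update_self, Function.update_of_ne (by omega)]
        exact hw (f i') (Finset.mem_union_right _ (Finset.mem_image.2 ⟨i', Finset.mem_range.2 hi', rfl⟩))

def CWClique (k r : ℕ) (R : SimpleGraph (Fin r)) (W : Fin k → Fin r) : Prop :=
  ∀ o o' : Fin k, o ≠ o' → R.Adj (W o) (W o')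

def CWChain (k r : ℕ) (R : SimpleGraph (Fin r)) (L : ℕ) (Ws : ℕ → Fin k → Fin r) : Prop :=
  (∀ b, b < L → CWClique k r R (Ws b)) ∧
  (∀ b, b + 1 < L → ∃ c : Fin k, ∀ o : Fin k, o ≠ c → Ws b o = Ws (b+1) o)

lemma cw_cross_adj (k r : ℕ) (R : SimpleGraph (Fin r)) (W W' : Fin k → Fin r)
    (hW : CWClique k r R W) (hW' : CWClique k r R W') (c : Fin k)
    (hdiff : ∀ o : Fin k, o ≠ c → W o = W' o) :
    ∀ o o' : Fin k, o ≠ o' → R.Adj (W o) (W' o') := by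
  intro o o' hne
  by_cases ho' : o' = c
  · by_cases ho : o = c
    · exact absurd (ho.trans ho'.symm) hne
    · rw [hdiff o ho]
      exact hW' o o' hne
  · rw [← hdiff o' ho']
    exact hW o o' hne

lemma cw_chain_concat (k r : ℕ) (R : SimpleGraph (Fin r)) (L1 L2 : ℕ)
    (Ws1 Ws2 : ℕ → Fin k → Fin r) (h1 : 1 ≤ L1) (h2 : 1 ≤ L2)
    (c1 : CWChain k r R L1 Ws1) (c2 : CWChain k r R L2 Ws2)
    (hglue : Ws1 (L1 - 1) = Ws2 0) :
    ∃ Ws, CWChain k r R (L1 + L2 - 1) Ws ∧ Ws 0 = Ws1 0 ∧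
      Ws (L1 + L2 - 1 - 1) = Ws2 (L2 - 1) := by
  refine ⟨fun b => if b < L1 then Ws1 b else Ws2 (b + 1 - L1), ⟨?_, ?_⟩, ?_, ?_⟩
  · intro b hb
    by_cases hbL : b < L1
    · simpa [hbL] using c1.1 b hbL
    · have : b + 1 - L1 < L2 := by omega
      simpa [hbL] using c2.1 _ this
  · intro b hb
    by_cases hbL : b + 1 < L1
    · have hb' : b < L1 := by omega
      obtain ⟨c, hc⟩ := c1.2 b hbL
      exact ⟨c, fun o ho => by simpa [hb', hbL] using hc o ho⟩
    · have hi : (b + 1 - L1) + 1 < L2 := by omega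
      obtain ⟨c, hc⟩ := c2.2 (b + 1 - L1) hi
      refine ⟨c, fun o ho => ?_⟩
      have hb1 : ¬ (b + 1 < L1) := hbL
      by_cases hbb : b < L1
      · have hbeq : b = L1 - 1 := by omega
        have hWb : Ws1 b = Ws2 0 := by rw [hbeq, hglue]
        simp only [if_pos hbb, if_neg hb1]
        rw [hWb]
        have := hc o ho
        rw [show b + 1 - L1 = 0 by omega] at this
        rw [show b + 1 + 1 - L1 = 0 + 1 by omega]
        exact this
      · have := hc o ho
        simp only [if_neg hbb, if_neg hb1]
        rw [show b + 1 + 1 - L1 = b + 1 - L1 + 1 by omega]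
        exact this
  · show (if 0 < L1 then Ws1 0 else Ws2 (0 + 1 - L1)) = Ws1 0
    rw [if_pos (show (0:ℕ) < L1 by omega)]
  · by_cases hL2 : L2 = 1
    · subst hL2
      have : L1 + 1 - 1 - 1 = L1 - 1 := by omega
      rw [this]
      simp only [show L1 - 1 < L1 by omega, if_pos]
      simpa using hglue
    · have hb : ¬ (L1 + L2 - 1 - 1 < L1) := by omega
      show (if L1 + L2 - 1 - 1 < L1 then Ws1 _ else Ws2 (L1 + L2 - 1 - 1 + 1 - L1)) = Ws2 (L2 - 1)
      rw [if_neg hb, show L1 + L2 - 1 - 1 + 1 - L1 = L2 - 1 by omega]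

lemma cw_refresh_lemma (k r : ℕ) (R : SimpleGraph (Fin r))
    (CN : ∀ S : Finset (Fin r), S.card ≤ k → ∃ w, ∀ s ∈ S, R.Adj s w)
    (F : Fin k → Fin r) (m : ℕ) :
    ∀ g, ∀ V : Fin k → Fin r, CWClique k r R V →
      (∀ o : Fin k, (o:ℕ) < m + 1 → V o = F o) →
      (∀ o : Fin k, m + 1 + g ≤ (o:ℕ) → ∀ (h : m + 1 < k), R.Adj (V o) (F ⟨m+1, h⟩)) →
      ∃ L Ws, 1 ≤ L ∧ L ≤ g + 1 ∧ CWChain k r R L Ws ∧ Ws 0 = V ∧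
        CWClique k r R (Ws (L-1)) ∧
        (∀ o : Fin k, (o:ℕ) < m + 1 → Ws (L-1) o = F o) ∧
        (∀ o : Fin k, m + 1 ≤ (o:ℕ) → ∀ (h : m + 1 < k), R.Adj (Ws (L-1) o) (F ⟨m+1, h⟩)) := by
  intro g
  induction g with
  | zero =>
    intro V hV hlow hhigh
    refine ⟨1, fun _ => V, le_refl 1, by omega, ⟨fun b _ => hV, fun b hb => by omega⟩,
      rfl, hV, hlow, fun o ho h => hhigh o (by omega) h⟩
  | succ g ih =>
    intro V hV hlow hhigh
    by_cases hok : m + 1 + g < k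
    · have hm1k : m + 1 < k := by omega
      set o0 : Fin k := ⟨m+1+g, hok⟩ with ho0
      set S := ((univ.erase o0).image V) ∪ {F ⟨m+1, hm1k⟩} with hSdef
      have hcard : S.card ≤ k := by
        have h1 : ((univ.erase o0).image V).card ≤ k - 1 := by
          calc ((univ.erase o0).image V).card ≤ (univ.erase o0).card := Finset.card_image_le
          _ = k - 1 := by rw [Finset.card_erase_of_mem (Finset.mem_univ _)]; simp
        have h2 : S.card ≤ ((univ.erase o0).image V).card + 1 := by
          calc S.card ≤ ((univ.erase o0).image V).card + ({F ⟨m+1, hm1k⟩} : Finset (Fin r)).card :=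
            Finset.card_union_le _ _
          _ = ((univ.erase o0).image V).card + 1 := by simp
        omega
      obtain ⟨w, hw⟩ := CN S hcard
      have hwadj : ∀ o : Fin k, o ≠ o0 → R.Adj (V o) w := fun o ho =>
        hw (V o) (Finset.mem_union_left _ (Finset.mem_image.2
          ⟨o, Finset.mem_erase.2 ⟨ho, Finset.mem_univ o⟩, rfl⟩))
      have hwF : R.Adj (F ⟨m+1, hm1k⟩) w := hw _ (Finset.mem_union_right _ (Finset.mem_singleton_self _))
      set V' := Function.update V o0 w with hV'def
      have hV'at : ∀ o : Fin k, o ≠ o0 → V' o = V o := fun o ho =>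
        Function.update_of_ne ho w V
      have hV'o0 : V' o0 = w := Function.update_self o0 w V
      have hV' : CWClique k r R V' := by
        intro o o' hne
        by_cases ho : o = o0 <;> by_cases ho' : o' = o0
        · exact absurd (ho.trans ho'.symm) hne
        · rw [ho, hV'o0, hV'at o' ho']
          exact (hwadj o' ho').symm
        · rw [ho', hV'o0, hV'at o ho]
          exact hwadj o ho
        · rw [hV'at o ho, hV'at o' ho']
          exact hV o o' hne
      have hlow' : ∀ o : Fin k, (o:ℕ) < m + 1 → V' o = F o := by
        intro o ho
        have : o ≠ o0 := by
          intro h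
          have hval : (o:ℕ) = m + 1 + g := by rw [h, ho0]
          omega
        rw [hV'at o this]; exact hlow o ho
      have hhigh' : ∀ o : Fin k, m + 1 + g ≤ (o:ℕ) → ∀ (h : m + 1 < k), R.Adj (V' o) (F ⟨m+1, h⟩) := by
        intro o ho h
        by_cases heq : o = o0
        · rw [heq, hV'o0]; exact hwF.symm
        · rw [hV'at o heq]
          have : (o:ℕ) ≠ m + 1 + g := by
            intro hc; exact heq (Fin.ext hc)
          exact hhigh o (by omega) h
      obtain ⟨L, Ws, hL1, hLle, hch, hWs0, hcl, hlowf, hhighf⟩ := ih V' hV' hlow' hhigh'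
      refine ⟨L+1, fun b => if b = 0 then V else Ws (b-1), by omega, by omega, ⟨?_, ?_⟩, by simp, ?_, ?_, ?_⟩
      · intro b hb
        by_cases hb0 : b = 0
        · simpa [hb0] using hV
        · simpa [hb0] using hch.1 (b-1) (by omega)
      · intro b hb
        by_cases hb0 : b = 0
        · refine ⟨o0, fun o ho => ?_⟩
          subst hb0
          simp only [if_pos rfl, if_neg (by omega : (1:ℕ) ≠ 0)]
          rw [hWs0]
          exact (hV'at o ho).symm
        · obtain ⟨c, hc⟩ := hch.2 (b-1) (by omega)
          refine ⟨c, fun o ho => ?_⟩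
          simp only [if_neg hb0, if_neg (by omega : b + 1 ≠ 0)]
          rw [show b + 1 - 1 = b - 1 + 1 by omega]
          exact hc o ho
      · simpa [show L + 1 - 1 = L by omega, show L ≠ 0 by omega] using hcl
      · intro o ho
        simpa [show L + 1 - 1 = L by omega, show L ≠ 0 by omega] using hlowf o ho
      · intro o ho h
        simpa [show L + 1 - 1 = L by omega, show L ≠ 0 by omega] using hhighf o ho h
    · have hvac : ∀ o : Fin k, m + 1 + g ≤ (o:ℕ) → ∀ (h : m + 1 < k), R.Adj (V o) (F ⟨m+1, h⟩) := by
        intro o ho h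
        exact absurd o.isLt (by omega)
      obtain ⟨L, Ws, hL1, hLle, hch, hWs0, hcl, hlowf, hhighf⟩ := ih V hV hlow hvac
      exact ⟨L, Ws, hL1, by omega, hch, hWs0, hcl, hlowf, hhighf⟩

lemma cw_morph_lemma (k r : ℕ) (R : SimpleGraph (Fin r))
    (CN : ∀ S : Finset (Fin r), S.card ≤ k → ∃ w, ∀ s ∈ S, R.Adj s w)
    (F : Fin k → Fin r) (hF : CWClique k r R F) :
    ∀ d m, m + d = k → ∀ W : Fin k → Fin r, CWClique k r R W →
      (∀ o : Fin k, (o:ℕ) < m → W o = F o) →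
      (∀ o : Fin k, m ≤ (o:ℕ) → ∀ (h : m < k), R.Adj (W o) (F ⟨m, h⟩)) →
      ∃ L Ws, 1 ≤ L ∧ L ≤ d * (k+1) + 1 ∧ CWChain k r R L Ws ∧ Ws 0 = W ∧ Ws (L-1) = F := by
  intro d
  induction d with
  | zero =>
    intro m hm W hW hlow _
    have hWF : W = F := funext fun o => hlow o (by omega)
    exact ⟨1, fun _ => W, le_refl 1, by omega, ⟨fun b _ => hW, fun b hb => by omega⟩, rfl, hWF⟩
  | succ d ih =>
    intro m hm W hW hlow hinv
    have hmk : m < k := by omega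
    set mf : Fin k := ⟨m, hmk⟩ with hmf
    set W1 := Function.update W mf (F mf) with hW1def
    have hW1at : ∀ o : Fin k, o ≠ mf → W1 o = W o := fun o ho => Function.update_of_ne ho _ W
    have hW1mf : W1 mf = F mf := Function.update_self mf (F mf) W
    have hW1 : CWClique k r R W1 := by
      intro o o' hne
      by_cases ho : o = mf <;> by_cases ho' : o' = mf
      · exact absurd (ho.trans ho'.symm) hne
      · rw [ho, hW1mf, hW1at o' ho']
        by_cases hlt : (o':ℕ) < m
        · rw [hlow o' hlt]
          exact hF mf o' (Ne.symm ho')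
        · exact (hinv o' (by omega) hmk).symm
      · rw [ho', hW1mf, hW1at o ho]
        by_cases hlt : (o:ℕ) < m
        · rw [hlow o hlt]
          exact (hF mf o (Ne.symm ho)).symm
        · exact hinv o (by omega) hmk
      · rw [hW1at o ho, hW1at o' ho']
        exact hW o o' hne
    have hlow1 : ∀ o : Fin k, (o:ℕ) < m + 1 → W1 o = F o := by
      intro o ho
      by_cases heq : o = mf
      · rw [heq, hW1mf]
      · have : (o:ℕ) ≠ m := fun hc => heq (Fin.ext hc)
        rw [hW1at o heq]
        exact hlow o (by omega)
    have hhigh1 : ∀ o : Fin k, m + 1 + (k - (m+1)) ≤ (o:ℕ) → ∀ (h : m + 1 < k),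
        R.Adj (W1 o) (F ⟨m+1, h⟩) := by
      intro o ho h
      exact absurd o.isLt (by omega)
    obtain ⟨L2, Ws2, hL2, hL2le, hch2, hWs20, hZcl, hZlow, hZhigh⟩ :=
      cw_refresh_lemma k r R CN F m (k - (m+1)) W1 hW1 hlow1 hhigh1
    obtain ⟨L3, Ws3, hL3, hL3le, hch3, hWs30, hWs3F⟩ :=
      ih (m+1) (by omega) (Ws2 (L2-1)) hZcl hZlow hZhigh
    have chA : CWChain k r R 2 (fun b => if b = 0 then W else W1) := by
      constructor
      · intro b hb
        by_cases hb0 : b = 0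
        · simpa [hb0] using hW
        · simpa [hb0] using hW1
      · intro b hb
        have hb0 : b = 0 := by omega
        refine ⟨mf, fun o ho => ?_⟩
        subst hb0
        simp only [if_pos rfl, if_neg (by omega : (1:ℕ) ≠ 0)]
        exact (hW1at o ho).symm
    have hglueA : (fun b => if b = 0 then W else W1) (2 - 1) = Ws2 0 := by
      simp [hWs20]
    obtain ⟨WsB, hchB, hB0, hBlast⟩ :=
      cw_chain_concat k r R 2 L2 _ Ws2 (by omega) hL2 chA hch2 hglueA
    have hglueB : WsB (2 + L2 - 1 - 1) = Ws3 0 := by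
      rw [hBlast, hWs30]
    obtain ⟨WsC, hchC, hC0, hClast⟩ :=
      cw_chain_concat k r R (2 + L2 - 1) L3 WsB Ws3 (by omega) hL3 hchB hch3 hglueB
    refine ⟨2 + L2 - 1 + L3 - 1, WsC, by omega, ?_, hchC, ?_, ?_⟩
    · have hexp : (d + 1) * (k + 1) = d * (k + 1) + (k + 1) := by ring
      omega
    · rw [hC0, hB0]
      simp
    · rw [hClast, hWs3F]

lemma cw_master (k r : ℕ) (hk : 2 ≤ k) (hr : 2 ≤ r) (R : SimpleGraph (Fin r))
    (CN : ∀ S : Finset (Fin r), S.card ≤ k → ∃ w, ∀ s ∈ S, R.Adj s w)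
    (x y : Fin k → Fin r) :
    ∃ (L : ℕ) (Full : ℕ → Fin k → Fin r), 1 ≤ L ∧ L ≤ k*(k+1)+1 ∧ Full 0 = x ∧ Full (L+1) = y ∧
      (∀ b, 1 ≤ b → b ≤ L → CWClique k r R (Full b)) ∧
      (∀ b, b ≤ L → ∀ o o' : Fin k, (o':ℕ) < (o:ℕ) → R.Adj (Full b o) (Full (b+1) o')) := by
  have hk0 : 0 < k := by omega
  have hr0 : 0 < r := by omega
  -- construct the exit window F
  have hcardF : ∀ i, i < k →
      ((univ.filter (fun j : Fin k => (j:ℕ) < k - 1 - i)).image y).card + i ≤ k := by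
    intro i hi
    have h1 : (univ.filter (fun j : Fin k => (j:ℕ) < k - 1 - i)).card ≤ k - 1 - i := by
      have h2 := Finset.card_le_card_of_injOn
        (s := univ.filter (fun j : Fin k => (j:ℕ) < k - 1 - i))
        (t := Finset.range (k - 1 - i)) (fun j : Fin k => (j:ℕ))
        (fun j hj => Finset.mem_range.2 (Finset.mem_filter.1 hj).2)
        (fun a _ b _ h => Fin.ext h)
      simpa using h2
    have h2 : ((univ.filter (fun j : Fin k => (j:ℕ) < k - 1 - i)).image y).card
        ≤ (univ.filter (fun j : Fin k => (j:ℕ) < k - 1 - i)).card := Finset.card_image_le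
    omega
  obtain ⟨f, hf⟩ := cw_greedy_lemma k r hr0 R CN k _ hcardF
  set F : Fin k → Fin r := fun c => f (k - 1 - (c:ℕ)) with hFdef
  have hFcl : CWClique k r R F := by
    intro o o' hne
    have hvne : (o:ℕ) ≠ (o':ℕ) := Fin.val_ne_of_ne hne
    have ho := o.isLt
    have ho' := o'.isLt
    rcases Nat.lt_or_ge (k - 1 - (o:ℕ)) (k - 1 - (o':ℕ)) with h | h
    · exact (hf (k - 1 - (o':ℕ)) (by omega)).2 _ h
    · have h' : k - 1 - (o':ℕ) < k - 1 - (o:ℕ) := by omega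
      exact ((hf (k - 1 - (o:ℕ)) (by omega)).2 _ h').symm
  have hFy : ∀ c j : Fin k, (j:ℕ) < (c:ℕ) → R.Adj (F c) (y j) := by
    intro c j hcj
    have hc := c.isLt
    have hmem : y j ∈ (univ.filter (fun j' : Fin k =>
        (j':ℕ) < k - 1 - (k - 1 - (c:ℕ)))).image y :=
      Finset.mem_image.2 ⟨j, Finset.mem_filter.2 ⟨Finset.mem_univ _, by omega⟩, rfl⟩
    exact ((hf (k - 1 - (c:ℕ)) (by omega)).1 (y j) hmem).symm
  -- construct the entry window E
  set F0 : Fin r := F ⟨0, hk0⟩ with hF0def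
  have hcardE : ∀ i, i < k →
      ((((univ.filter (fun j : Fin k => i < (j:ℕ)))).image x ∪ {F0}).card) + i ≤ k := by
    intro i hi
    have h1 : (univ.filter (fun j : Fin k => i < (j:ℕ))).card ≤ k - 1 - i := by
      have h2 := Finset.card_le_card_of_injOn
        (s := univ.filter (fun j : Fin k => i < (j:ℕ)))
        (t := Finset.range (k - 1 - i)) (fun j : Fin k => (j:ℕ) - (i+1))
        (fun j hj => Finset.mem_range.2 (by
          have h3 : i < (j : Fin k).1 := (Finset.mem_filter.1 hj).2
          have h4 := (j : Fin k).isLt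
          show (j : Fin k).1 - (i+1) < k - 1 - i
          omega))
        (fun a ha b hb h => by
          have ha' : i < (a : Fin k).1 := (Finset.mem_filter.1 ha).2
          have hb' : i < (b : Fin k).1 := (Finset.mem_filter.1 hb).2
          have h' : (a : Fin k).1 - (i+1) = (b : Fin k).1 - (i+1) := h
          exact Fin.ext (by omega))
      simpa using h2
    have h2 : ((univ.filter (fun j : Fin k => i < (j:ℕ))).image x).card
        ≤ (univ.filter (fun j : Fin k => i < (j:ℕ))).card := Finset.card_image_le
    have h3 : ((((univ.filter (fun j : Fin k => i < (j:ℕ)))).image x ∪ {F0}).card)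
        ≤ ((univ.filter (fun j : Fin k => i < (j:ℕ))).image x).card + 1 := by
      calc ((((univ.filter (fun j : Fin k => i < (j:ℕ)))).image x ∪ {F0}).card)
          ≤ ((univ.filter (fun j : Fin k => i < (j:ℕ))).image x).card
            + ({F0} : Finset (Fin r)).card := Finset.card_union_le _ _
      _ = ((univ.filter (fun j : Fin k => i < (j:ℕ))).image x).card + 1 := by simp
    omega
  obtain ⟨e, he⟩ := cw_greedy_lemma k r hr0 R CN k _ hcardE
  set E : Fin k → Fin r := fun o => e (o:ℕ) with hEdef
  have hEcl : CWClique k r R E := by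
    intro o o' hne
    have hvne : (o:ℕ) ≠ (o':ℕ) := Fin.val_ne_of_ne hne
    rcases Nat.lt_or_ge (o:ℕ) (o':ℕ) with h | h
    · exact (he (o':ℕ) o'.isLt).2 _ h
    · have h' : (o':ℕ) < (o:ℕ) := by omega
      exact ((he (o:ℕ) o.isLt).2 _ h').symm
  have hEx : ∀ o i : Fin k, (o:ℕ) < (i:ℕ) → R.Adj (x i) (E o) := by
    intro o i hoi
    exact (he (o:ℕ) o.isLt).1 (x i) (Finset.mem_union_left _
      (Finset.mem_image.2 ⟨i, Finset.mem_filter.2 ⟨Finset.mem_univ _, hoi⟩, rfl⟩))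
  have hEF0 : ∀ o : Fin k, R.Adj (E o) F0 := by
    intro o
    exact ((he (o:ℕ) o.isLt).1 F0 (Finset.mem_union_right _ (Finset.mem_singleton_self _))).symm
  obtain ⟨L, Ws, hL1, hLle, hch, hWs0, hWsF⟩ :=
    cw_morph_lemma k r R CN F hFcl k 0 (by omega) E hEcl
      (fun o ho => absurd ho (by omega)) (fun o _ h => hEF0 o)
  set Full : ℕ → Fin k → Fin r :=
    fun b => if b = 0 then x else if b ≤ L then Ws (b-1) else y with hFulldef
  have hFull0 : Full 0 = x := by simp [hFulldef]
  have hFullmid : ∀ b, 1 ≤ b → b ≤ L → Full b = Ws (b-1) := by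
    intro b h1 h2
    simp only [hFulldef]
    rw [if_neg (by omega), if_pos h2]
  have hFullend : Full (L+1) = y := by
    simp only [hFulldef]
    rw [if_neg (by omega), if_neg (by omega)]
  refine ⟨L, Full, hL1, hLle, hFull0, hFullend, ?_, ?_⟩
  · intro b h1 h2
    rw [hFullmid b h1 h2]
    exact hch.1 (b-1) (by omega)
  · intro b hb o o' hoo
    by_cases hb0 : b = 0
    · subst hb0
      rw [hFull0, hFullmid 1 (le_refl 1) hL1, hWs0]
      exact hEx o' o hoo
    · by_cases hbL : b = L
      · rw [hbL, hFullmid L (by omega) (le_refl L), hWsF, hFullend]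
        exact hFy o o' hoo
      · have h1b : 1 ≤ b := by omega
        have hbL' : b < L := by omega
        obtain ⟨c, hc⟩ := hch.2 (b-1) (by omega)
        have hdiff : ∀ o'' : Fin k, o'' ≠ c → Ws (b-1) o'' = Ws b o'' := by
          intro o'' ho''
          have := hc o'' ho''
          rwa [show b - 1 + 1 = b by omega] at this
        have hcr := cw_cross_adj k r R (Ws (b-1)) (Ws b)
          (hch.1 (b-1) (by omega)) (hch.1 b (by omega)) c hdiff
        rw [hFullmid b h1b (by omega), hFullmid (b+1) (by omega) (by omega),
          show b + 1 - 1 = b by omega]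
        exact hcr o o' (Fin.ne_of_val_ne (by omega))

end CliqueWalkAux

/-- **Lemma: clique-walks (Lemma 2.7).**  Let `r, k ≥ 2` and let `R` be an `r`-vertex graph
with `δ(R) ≥ (1 - 1/k) r + 1`.  For any two ordered tuples `Q₁ = (x₁, …, x_k)` and
`Q₂ = (y₁, …, y_k)` of `k` distinct vertices there is a walk `z₁, …, z_t` (positions
1-based, encoded by `z : ℕ → Fin r`) with `3k ≤ t ≤ 3k³`, `k ∣ t`, starting with `Q₁`,
ending with `Q₂`, and such that `z_i z_j ∈ E(R)` whenever `0 < |i - j| ≤ k - 1` and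
`{i, j}` is not contained in the union of the first `k` and last `k` positions. -/
theorem clique_walk
    (r k : ℕ) (hr : 2 ≤ r) (hk : 2 ≤ k)
    (R : SimpleGraph (Fin r))
    (hδ : ∀ v, (1 - 1 / (k : ℝ)) * r + 1 ≤ (R.degree v : ℝ))
    (x y : Fin k → Fin r) (hx : Function.Injective x) (hy : Function.Injective y) :
    ∃ (t : ℕ) (z : ℕ → Fin r),
      3 * k ≤ t ∧ t ≤ 3 * k ^ 3 ∧ k ∣ t ∧
      (∀ i j : ℕ, 1 ≤ i → i ≤ t → 1 ≤ j → j ≤ t → i ≠ j →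
        |(i : ℤ) - (j : ℤ)| ≤ (k : ℤ) - 1 →
        ¬((i ≤ k ∨ t - k + 1 ≤ i) ∧ (j ≤ k ∨ t - k + 1 ≤ j)) →
        R.Adj (z i) (z j)) ∧
      (∀ i : Fin k, z ((i : ℕ) + 1) = x i ∧ z (t - k + ((i : ℕ) + 1)) = y i) := by
  have hk0 : 0 < k := by omega
  have CN := cw_cn_lemma k r hk hr R hδ
  obtain ⟨L, Full, hL1, hLle, hFull0, hFullend, hcliq, hC2⟩ := cw_master k r hk hr R CN x y
  set t := (L+2)*k with htdef
  have hkt : t = k*(L+2) := by rw [htdef]; ring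
  set z : ℕ → Fin r := fun p => Full ((p-1)/k) ⟨(p-1) % k, Nat.mod_lt _ hk0⟩ with hzdef
  have zeq : ∀ (p b : ℕ) (o : Fin k), p - 1 = k*b + (o:ℕ) → z p = Full b o := by
    intro p b o hpb
    have hdiv : (p-1)/k = b := by
      rw [hpb, Nat.mul_add_div hk0, Nat.div_eq_of_lt o.isLt]
      omega
    have hmod : (p-1) % k = (o:ℕ) := by
      rw [hpb, Nat.mul_add_mod]
      exact Nat.mod_eq_of_lt o.isLt
    simp only [hzdef]
    rw [hdiv]
    exact congrArg (Full b) (Fin.ext hmod)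
  have ht3 : 3*k ≤ t := by
    calc 3*k = k*3 := by ring
    _ ≤ k*(L+2) := Nat.mul_le_mul_left k (by omega)
    _ = t := hkt.symm
  have hstep : t - k = k*(L+1) := by
    rw [htdef]
    exact Nat.sub_eq_of_eq_add (by ring)
  refine ⟨t, z, ht3, ?_, ⟨L+2, hkt⟩, ?_, ?_⟩
  · -- t ≤ 3 k³
    have hkk : 2*k ≤ k*k := Nat.mul_le_mul_right k hk
    have h1 : k*(k+1) = k*k + k := by ring
    have hL2 : L + 2 ≤ 3*(k*k) := by
      generalize hK1 : k*(k+1) = K1 at hLle h1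
      generalize hKK : k*k = KK at h1 hkk ⊢
      omega
    calc t = k*(L+2) := hkt
    _ ≤ k*(3*(k*k)) := Nat.mul_le_mul_left k hL2
    _ = 3*k^3 := by ring
  · -- main adjacency condition
    have key : ∀ p q, 1 ≤ p → q ≤ t → p < q → q - p ≤ k - 1 →
        ¬((p ≤ k ∨ t - k + 1 ≤ p) ∧ (q ≤ k ∨ t - k + 1 ≤ q)) → R.Adj (z p) (z q) := by
      intro p q hp hq hpq hqk hends
      obtain ⟨b1, u, e1, hu⟩ : ∃ b1 u, k*b1 + u = p - 1 ∧ u < k :=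
        ⟨(p-1)/k, (p-1)%k, Nat.div_add_mod _ _, Nat.mod_lt _ hk0⟩
      obtain ⟨b2, u', e2, hu'⟩ : ∃ b2 u', k*b2 + u' = q - 1 ∧ u' < k :=
        ⟨(q-1)/k, (q-1)%k, Nat.div_add_mod _ _, Nat.mod_lt _ hk0⟩
      have hzp : z p = Full b1 ⟨u, hu⟩ := zeq p b1 ⟨u, hu⟩ e1.symm
      have hzq : z q = Full b2 ⟨u', hu'⟩ := zeq q b2 ⟨u', hu'⟩ e2.symm
      have hd12 : b1 < b2 + 1 := by
        apply lt_of_mul_lt_mul_left (a := k) _ (Nat.zero_le k)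
        have hx0 : k*(b2+1) = k*b2 + k := by ring
        rw [hx0]
        omega
      have hq1 : q - 1 < k*(L+2) := by rw [← hkt]; omega
      -- b2 < L + 2
      have hBq : k*b2 ≤ q - 1 := by
        calc k*b2 ≤ k*b2 + u' := Nat.le_add_right _ _
        _ = q - 1 := e2
      have hb2lt : b2 < L + 2 := lt_of_mul_lt_mul_left
        (lt_of_le_of_lt hBq hq1) (Nat.zero_le k)
      -- b2 ≤ b1 + 1
      have hb2le1 : b2 < b1 + 2 := by
        apply lt_of_mul_lt_mul_left (a := k) _ (Nat.zero_le k)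
        have hx1 : k*(b1+2) = k*b1 + k + k := by ring
        calc k*b2 ≤ q - 1 := hBq
        _ < k*b1 + k + k := by omega
        _ = k*(b1+2) := hx1.symm
      have hcase : b2 = b1 ∨ b2 = b1 + 1 := by omega
      rcases hcase with hsame | hsucc
      · -- same block
        have hBA : k*b2 = k*b1 := by rw [hsame]
        have huv : u ≠ u' := by
          generalize hA : k*b1 = A at e1 hBA
          generalize hB : k*b2 = B at e2 hBA
          omega
        rcases (show b1 = 0 ∨ b1 = L+1 ∨ (1 ≤ b1 ∧ b1 ≤ L) by omega) with h0 | hL' | hmid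
        · exfalso
          apply hends
          rw [hsame, h0] at e2
          rw [h0] at e1
          simp only [Nat.mul_zero, Nat.zero_add] at e1 e2
          exact ⟨Or.inl (by omega), Or.inl (by omega)⟩
        · exfalso
          apply hends
          rw [hsame, hL'] at e2
          rw [hL'] at e1
          rw [← hstep] at e1 e2
          have hgp : t - k + 1 ≤ p := by omega
          have hgq : t - k + 1 ≤ q := by omega
          exact ⟨Or.inr hgp, Or.inr hgq⟩
        · rw [hzp, hzq, hsame]
          exact hcliq b1 hmid.1 hmid.2 ⟨u, hu⟩ ⟨u', hu'⟩ (Fin.ne_of_val_ne huv)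
      · -- consecutive blocks
        have hb1L : b1 ≤ L := by omega
        have hBA : k*b2 = k*b1 + k := by rw [hsucc]; ring
        have hu'u : u' < u := by
          generalize hA : k*b1 = A at e1 hBA
          generalize hB : k*b2 = B at e2 hBA
          omega
        rw [hzp, hzq, hsucc]
        exact hC2 b1 hb1L ⟨u, hu⟩ ⟨u', hu'⟩ hu'u
    intro i j h1i hit h1j hjt hne habs hends
    have habs' := abs_sub_le_iff.mp habs
    rcases lt_or_gt_of_ne hne with h | h
    · exact key i j h1i hjt h (by omega) hends
    · exact (key j i h1j hit h (by omega) (fun hh => hends ⟨hh.2, hh.1⟩)).symm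
  · -- end windows
    intro i
    constructor
    · rw [zeq ((i:ℕ)+1) 0 i (by omega), hFull0]
    · have hp : t - k + ((i:ℕ)+1) - 1 = k*(L+1) + (i:ℕ) := by
        have hik : (i:ℕ) < k := i.isLt
        rw [show t - k + ((i:ℕ)+1) - 1 = (t - k) + (i:ℕ) by omega, hstep]
      rw [zeq (t - k + ((i:ℕ)+1)) (L+1) i hp, hFullend]
end

section
/- Let k ≥ 2 and ε > 0, and let r be a positive integer divisible by k with εr ≥ 6. Let R be a graph on vertex set [r] with δ(R) ≥ (1 − 1/k + ε)r, and let Q be a K_k-factor of R with vertex-disjoint k-cliques Q¹, …, Q^{r'}, where r' = r/k. Define a digraph D on vertex set [r] with an arc from i to j whenever i ≠ j and N_Q(j) ⊆ N_R(i). Then there exist at least two indices s ∈ [r'] such that for every j ∈ V(Q^s) and every i ∈ [r] there exists a directed path in D from i to j. -/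
open Finset
open scoped Classical

section ClaimAux

variable {r r' k : ℕ}

private def Stp (R : SimpleGraph (Fin r)) (cl : Fin r → Fin r') (a b : Fin r) : Prop :=
  a ≠ b ∧ ∀ j' : Fin r, j' ≠ b → cl j' = cl b → R.Adj a j'

private def OutCl (R : SimpleGraph (Fin r)) (cl : Fin r → Fin r') (A : Set (Fin r)) : Prop :=
  ∀ ⦃a⦄, a ∈ A → ∀ ⦃b⦄, Stp R cl a b → b ∈ A

private noncomputable def meets (cl : Fin r → Fin r') (A : Set (Fin r)) : Finset (Fin r') :=
  univ.filter fun c => ∃ u, cl u = c ∧ u ∈ A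

private noncomputable def fullc (cl : Fin r → Fin r') (A : Set (Fin r)) : Finset (Fin r') :=
  univ.filter fun c => ∀ u, cl u = c → u ∈ A

private lemma not_step {R : SimpleGraph (Fin r)} {cl : Fin r → Fin r'} {v u : Fin r}
    (hvu : v ≠ u) (h : ¬ Stp R cl v u) :
    ∃ w, w ≠ u ∧ cl w = cl u ∧ ¬ R.Adj v w := by
  by_contra hcon
  push_neg at hcon
  exact h ⟨hvu, fun j' hj hcj => hcon j' hj hcj⟩

private lemma fullc_subset_meets (hk : 2 ≤ k) {cl : Fin r → Fin r'}
    (hcl : ∀ c0 : Fin r', (univ.filter fun i => cl i = c0).card = k)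
    (A : Set (Fin r)) : fullc cl A ⊆ meets cl A := by
  intro c hc
  have hpos : 0 < (univ.filter fun i => cl i = c).card := by
    rw [hcl c]; omega
  obtain ⟨u, hu⟩ := card_pos.mp hpos
  have hcu : cl u = c := (mem_filter.mp hu).2
  exact mem_filter.mpr ⟨mem_univ _, u, hcu, (mem_filter.mp hc).2 u hcu⟩

/-- Counting lemma: for `v` in an out-closed set `A`, `v` has at least two non-neighbours
in every clique disjoint from `A` and at least one in every clique meeting `A` but not
contained in `A`. -/
private lemma count_le (hk : 2 ≤ k) {R : SimpleGraph (Fin r)} {cl : Fin r → Fin r'}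
    (hcl : ∀ c0 : Fin r', (univ.filter fun i => cl i = c0).card = k)
    {A : Set (Fin r)} (hA : OutCl R cl A) {v : Fin r} (hv : v ∈ A) :
    2 * (univ \ meets cl A).card + (meets cl A \ fullc cl A).card
      ≤ (univ.filter fun u => ¬ R.Adj v u).card := by
  classical
  set Bad : Finset (Fin r) := univ.filter fun u => ¬ R.Adj v u with hBadDef
  have hfib : Bad.card = ∑ c ∈ (univ : Finset (Fin r')), (Bad.filter fun u => cl u = c).card :=
    card_eq_sum_card_fiberwise (fun x _ => mem_univ _)
  have h2 : ∀ c ∈ univ \ meets cl A, 2 ≤ (Bad.filter fun u => cl u = c).card := by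
    intro c hc
    have hcA : ∀ u, cl u = c → u ∉ A := by
      intro u hu huA
      exact (mem_sdiff.mp hc).2 (mem_filter.mpr ⟨mem_univ _, u, hu, huA⟩)
    have hpos : 0 < (univ.filter fun i => cl i = c).card := by rw [hcl c]; omega
    obtain ⟨u, hu⟩ := card_pos.mp hpos
    have hcu : cl u = c := (mem_filter.mp hu).2
    have hvu : v ≠ u := fun h => hcA u hcu (h ▸ hv)
    obtain ⟨w, hwu, hwc, hwadj⟩ := not_step hvu (fun h => hcA u hcu (hA hv h))
    have hwc' : cl w = c := hwc.trans hcu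
    have hwA : w ∉ A := hcA w hwc'
    have hvw : v ≠ w := fun h => hwA (h ▸ hv)
    obtain ⟨w', hw'w, hw'c, hw'adj⟩ := not_step hvw (fun h => hwA (hA hv h))
    have hw'c' : cl w' = c := hw'c.trans hwc'
    refine Finset.one_lt_card.mpr ⟨w', ?_, w, ?_, hw'w⟩
    · exact mem_filter.mpr ⟨mem_filter.mpr ⟨mem_univ _, hw'adj⟩, hw'c'⟩
    · exact mem_filter.mpr ⟨mem_filter.mpr ⟨mem_univ _, hwadj⟩, hwc'⟩
  have h1 : ∀ c ∈ meets cl A \ fullc cl A, 1 ≤ (Bad.filter fun u => cl u = c).card := by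
    intro c hc
    have hnf : ¬ ∀ u, cl u = c → u ∈ A := fun h =>
      (mem_sdiff.mp hc).2 (mem_filter.mpr ⟨mem_univ _, h⟩)
    push_neg at hnf
    obtain ⟨u, hcu, huA⟩ := hnf
    have hvu : v ≠ u := fun h => huA (h ▸ hv)
    obtain ⟨w, hwu, hwc, hwadj⟩ := not_step hvu (fun h => huA (hA hv h))
    refine card_pos.mpr ⟨w, mem_filter.mpr ⟨mem_filter.mpr ⟨mem_univ _, hwadj⟩, hwc.trans hcu⟩⟩
  have hdisj : Disjoint (univ \ meets cl A) (meets cl A \ fullc cl A) := by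
    rw [Finset.disjoint_left]
    intro c hc hc'
    exact (mem_sdiff.mp hc).2 (mem_sdiff.mp hc').1
  calc 2 * (univ \ meets cl A).card + (meets cl A \ fullc cl A).card
      = (∑ _c ∈ univ \ meets cl A, 2) + ∑ _c ∈ meets cl A \ fullc cl A, 1 := by
        rw [Finset.sum_const, Finset.sum_const, smul_eq_mul, smul_eq_mul]
        ring
    _ ≤ (∑ c ∈ univ \ meets cl A, (Bad.filter fun u => cl u = c).card)
          + ∑ c ∈ meets cl A \ fullc cl A, (Bad.filter fun u => cl u = c).card :=
        add_le_add (Finset.sum_le_sum h2) (Finset.sum_le_sum h1)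
    _ = ∑ c ∈ (univ \ meets cl A) ∪ (meets cl A \ fullc cl A),
          (Bad.filter fun u => cl u = c).card := (Finset.sum_union hdisj).symm
    _ ≤ ∑ c ∈ (univ : Finset (Fin r')), (Bad.filter fun u => cl u = c).card :=
        Finset.sum_le_sum_of_subset (subset_univ _)
    _ = Bad.card := hfib.symm

/-- For a nonempty out-closed set `A`, `χ_A + α_A ≥ r' + εr`. -/
private lemma chi_alpha (hk : 2 ≤ k) (hrk : k * r' = r) {ε : ℝ} (hε : 0 < ε)
    {R : SimpleGraph (Fin r)}
    (hδ : ∀ v, (1 - 1 / (k : ℝ) + ε) * r ≤ (R.degree v : ℝ))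
    {cl : Fin r → Fin r'}
    (hcl : ∀ c0 : Fin r', (univ.filter fun i => cl i = c0).card = k)
    {A : Set (Fin r)} (hA : OutCl R cl A) (hAne : A.Nonempty) :
    (r' : ℝ) + ε * r ≤ (meets cl A).card + (fullc cl A).card := by
  classical
  obtain ⟨v, hv⟩ := hAne
  have hcount := count_le hk hcl hA hv
  have hMF : fullc cl A ⊆ meets cl A := fullc_subset_meets hk hcl A
  have e1 : (univ \ meets cl A).card + (meets cl A).card = r' := by
    rw [Finset.card_sdiff_add_card_eq_card (subset_univ _), card_univ, Fintype.card_fin]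
  have e2 : (meets cl A \ fullc cl A).card + (fullc cl A).card = (meets cl A).card :=
    Finset.card_sdiff_add_card_eq_card hMF
  -- degrees
  have hBadDeg : (univ.filter fun u => ¬ R.Adj v u).card + R.degree v = r := by
    have h := Finset.card_filter_add_card_filter_not
      (s := (univ : Finset (Fin r))) (p := fun u => R.Adj v u)
    have hdeg : R.degree v = (univ.filter fun u => R.Adj v u).card := by
      rw [SimpleGraph.degree, SimpleGraph.neighborFinset_eq_filter]
    have hu : (univ : Finset (Fin r)).card = r := by simp
    rw [hdeg]
    omega
  -- real arithmetic
  have hk0 : (0:ℝ) < (k:ℝ) := by exact_mod_cast (by omega : 0 < k)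
  have hkrR : (k:ℝ) * (r':ℝ) = (r:ℝ) := by exact_mod_cast hrk
  have hinv : (1 - 1/(k:ℝ) + ε) * r = (r:ℝ) - (r':ℝ) + ε * r := by
    have h1 : (1/(k:ℝ)) * r = (r':ℝ) := by
      rw [← hkrR]; field_simp
    nlinarith [h1]
  have hδv := hδ v
  rw [hinv] at hδv
  have hcountR : 2 * ((univ \ meets cl A).card : ℝ) + ((meets cl A \ fullc cl A).card : ℝ)
      ≤ ((univ.filter fun u => ¬ R.Adj v u).card : ℝ) := by exact_mod_cast hcount
  have e1R : ((univ \ meets cl A).card : ℝ) + ((meets cl A).card : ℝ) = (r' : ℝ) := by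
    exact_mod_cast e1
  have e2R : ((meets cl A \ fullc cl A).card : ℝ) + ((fullc cl A).card : ℝ)
      = ((meets cl A).card : ℝ) := by exact_mod_cast e2
  have hBadDegR : ((univ.filter fun u => ¬ R.Adj v u).card : ℝ) + (R.degree v : ℝ) = (r:ℝ) := by
    exact_mod_cast hBadDeg
  linarith

/-- Two nonempty out-closed sets cannot be disjoint. -/
private lemma not_disjoint (hk : 2 ≤ k) (hrk : k * r' = r) (hr : 0 < r) {ε : ℝ} (hε : 0 < ε)
    {R : SimpleGraph (Fin r)}
    (hδ : ∀ v, (1 - 1 / (k : ℝ) + ε) * r ≤ (R.degree v : ℝ))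
    {cl : Fin r → Fin r'}
    (hcl : ∀ c0 : Fin r', (univ.filter fun i => cl i = c0).card = k)
    {A B : Set (Fin r)} (hA : OutCl R cl A) (hB : OutCl R cl B)
    (hAne : A.Nonempty) (hBne : B.Nonempty)
    (hd : ∀ x, x ∈ A → x ∈ B → False) : False := by
  classical
  have hA' := chi_alpha hk hrk hε hδ hcl hA hAne
  have hB' := chi_alpha hk hrk hε hδ hcl hB hBne
  have key : ∀ (X Y : Set (Fin r)), (∀ x, x ∈ X → x ∈ Y → False) →
      (meets cl X).card + (fullc cl Y).card ≤ r' := by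
    intro X Y hXY
    have hdj : Disjoint (meets cl X) (fullc cl Y) := by
      rw [Finset.disjoint_left]
      intro c hcM hcF
      obtain ⟨u, hu, huX⟩ := (mem_filter.mp hcM).2
      exact hXY u huX ((mem_filter.mp hcF).2 u hu)
    calc (meets cl X).card + (fullc cl Y).card
        = (meets cl X ∪ fullc cl Y).card := (Finset.card_union_of_disjoint hdj).symm
      _ ≤ (univ : Finset (Fin r')).card := card_le_card (subset_univ _)
      _ = r' := by rw [card_univ, Fintype.card_fin]
  have h1 := key A B hd
  have h2 := key B A (fun x hx hx' => hd x hx' hx)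
  have h1R : ((meets cl A).card : ℝ) + ((fullc cl B).card : ℝ) ≤ (r' : ℝ) := by exact_mod_cast h1
  have h2R : ((meets cl B).card : ℝ) + ((fullc cl A).card : ℝ) ≤ (r' : ℝ) := by exact_mod_cast h2
  have hre : (0:ℝ) < ε * r := by
    have : (0:ℝ) < (r:ℝ) := by exact_mod_cast hr
    positivity
  linarith

end ClaimAux

/-- **Claim 5.2.** -/
theorem digraph_reachability
    (k : ℕ) (hk : 2 ≤ k) (ε : ℝ) (hε : 0 < ε)
    (r : ℕ) (hr : 0 < r) (hkr : k ∣ r) (hεr : 6 ≤ ε * r)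
    (R : SimpleGraph (Fin r))
    (hδ : ∀ v, (1 - 1 / (k : ℝ) + ε) * r ≤ (R.degree v : ℝ))
    (cl : Fin r → Fin (r / k))
    (hcl : ∀ c0 : Fin (r / k), (Finset.univ.filter fun i => cl i = c0).card = k)
    (hclique : ∀ i j, i ≠ j → cl i = cl j → R.Adj i j) :
    ∃ s₁ s₂ : Fin (r / k), s₁ ≠ s₂ ∧
      ∀ s ∈ ({s₁, s₂} : Set (Fin (r / k))), ∀ j : Fin r, cl j = s → ∀ i : Fin r,
        Relation.ReflTransGen
          (fun a b : Fin r => a ≠ b ∧ ∀ j' : Fin r, j' ≠ b → cl j' = cl b → R.Adj a j')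
          i j := by
  classical
  have hrk : k * (r / k) = r := Nat.mul_div_cancel' hkr
  -- reach-sets are out-closed and nonempty; G is their intersection
  set Rel : Fin r → Fin r → Prop := Stp R cl with hRel
  have hreachOut : ∀ (s : Finset (Fin r)),
      OutCl R cl {w | ∀ i ∈ s, Relation.ReflTransGen Rel i w} := by
    intro s a ha b hab i hi
    exact Relation.ReflTransGen.tail (ha i hi) hab
  have hkey : ∀ s : Finset (Fin r), ∃ w, ∀ i ∈ s, Relation.ReflTransGen Rel i w := by
    intro s
    induction s using Finset.induction_on with
    | empty => exact ⟨⟨0, hr⟩, by simp⟩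
    | @insert x s hx ih =>
      obtain ⟨w, hw⟩ := ih
      have hAne : Set.Nonempty {w | ∀ i ∈ s, Relation.ReflTransGen Rel i w} := ⟨w, hw⟩
      have hBne : Set.Nonempty {w | Relation.ReflTransGen Rel x w} :=
        ⟨x, Relation.ReflTransGen.refl⟩
      have hBOut : OutCl R cl {w | Relation.ReflTransGen Rel x w} := by
        intro a ha b hab
        exact Relation.ReflTransGen.tail ha hab
      by_contra hcon
      push_neg at hcon
      refine not_disjoint hk hrk hr hε hδ hcl (hreachOut s) hBOut hAne hBne ?_
      intro y hyA hyB
      obtain ⟨i, hi, hni⟩ := hcon y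
      refine hni ?_
      rcases Finset.mem_insert.mp hi with h | h
      · exact h ▸ hyB
      · exact hyA i h
  obtain ⟨w₀, hw₀⟩ := hkey Finset.univ
  set G : Set (Fin r) := {w | ∀ i : Fin r, Relation.ReflTransGen Rel i w} with hG
  have hGne : G.Nonempty := ⟨w₀, fun i => hw₀ i (mem_univ i)⟩
  have hGOut : OutCl R cl G := by
    intro a ha b hab i
    exact Relation.ReflTransGen.tail (ha i) hab
  have hca := chi_alpha hk hrk hε hδ hcl hGOut hGne
  have hχ : ((meets cl G).card : ℝ) ≤ ((r / k : ℕ) : ℝ) := by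
    exact_mod_cast (by simpa using card_le_univ (meets cl G) : (meets cl G).card ≤ r / k)
  have hα2 : 1 < (fullc cl G).card := by
    have : (2:ℝ) ≤ ((fullc cl G).card : ℝ) := by linarith
    exact_mod_cast (by linarith : (1:ℝ) < ((fullc cl G).card : ℝ))
  obtain ⟨s₁, hs₁, s₂, hs₂, hne⟩ := Finset.one_lt_card.mp hα2
  refine ⟨s₁, s₂, hne, ?_⟩
  intro s hs j hj i
  have hfull1 : ∀ u, cl u = s₁ → u ∈ G := by
    have h := hs₁
    simp only [fullc, Finset.mem_filter] at h
    exact h.2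
  have hfull2 : ∀ u, cl u = s₂ → u ∈ G := by
    have h := hs₂
    simp only [fullc, Finset.mem_filter] at h
    exact h.2
  have hfull : ∀ u, cl u = s → u ∈ G := by
    rcases hs with h | h
    · exact h ▸ hfull1
    · rw [Set.mem_singleton_iff] at h
      exact h ▸ hfull2
  exact hfull j hj i
end
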